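/- Let p > 1 be a real number and let n be a positive integer. Then the sum of P^Sym_n(λ) over all partitions λ with at most n parts equals 1; that is, P^Sym_n is a probability distribution on partitions. -/

import Mathlib

open Finset

noncomputable section

/-- A partition: a multiset of positive natural numbers. -/
def Ptn : Type := {s : Multiset ℕ // ∀ x ∈ s, 0 < x}

namespace Ptn

/-- `|λ|`, the size of the partition. -/
def size (l : Ptn) : ℕ := l.1.sum
/-- `r(λ)`, the number of parts. -/
def numParts (l : Ptn) : ℕ := l.1.card
/-- `m_i(λ)`, the number of parts of size `i`. -/
def mult (l : Ptn) (i : ℕ) : ℕ := l.1.count i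
/-- `λ'_i`, the number of parts of size at least `i` (the `i`-th column length). -/
def col (l : Ptn) (i : ℕ) : ℕ := (l.1.filter (fun x => i ≤ x)).card
/-- `λ_1`, the largest part. -/
def maxPart (l : Ptn) : ℕ := l.1.sup
/-- `∑_i (λ'_i)^2` (over `i ≥ 1`; the terms vanish for `i > |λ|`). -/
def sumColSq (l : Ptn) : ℕ := ∑ i ∈ Finset.Icc 1 l.size, (l.col i) ^ 2
/-- `n(λ) = ∑_i C(λ'_i, 2)` (over `i ≥ 1`; the terms vanish for `i > |λ|`). -/
def nStat (l : Ptn) : ℕ := ∑ i ∈ Finset.Icc 1 l.size, Nat.choose (l.col i) 2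

end Ptn

/-- `(x)_i = (1-x)(1-x/p)⋯(1-x/p^{i-1})`. -/
def poch (p x : ℝ) (i : ℕ) : ℝ := ∏ k ∈ Finset.range i, (1 - x / p ^ k)

/-- `|Aut(λ)| = p^{∑ (λ'_i)^2} ∏_i (1/p)_{m_i(λ)}`. -/
def autCard (p : ℝ) (l : Ptn) : ℝ :=
  p ^ l.sumColSq * ∏ i ∈ Finset.Icc 1 l.size, poch p (1 / p) (l.mult i)

/-- The measure `P_{d,u}` on partitions. -/
def Pdu (p u : ℝ) (d : ℕ) (l : Ptn) : ℝ :=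
  if l.numParts ≤ d then
    u ^ l.size / autCard p l
      * ∏ i ∈ Finset.Icc 1 d, (1 - u / p ^ i)
      * ∏ i ∈ Finset.Icc (d - l.numParts + 1) d, (1 - 1 / p ^ i)
  else 0

/-- The measure `P^{Sym}_n` on partitions (here `⌈(n-r)/2⌉` is `(n-r+1)/2` in
natural division). -/
def PSym (p : ℝ) (n : ℕ) (l : Ptn) : ℝ :=
  if l.numParts ≤ n then
    (∏ j ∈ Finset.Icc (n - l.numParts + 1) n, (1 - 1 / p ^ j)) *
      (∏ i ∈ Finset.Icc 1 ((n - l.numParts + 1) / 2), (1 - 1 / p ^ (2 * i - 1))) /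
      (p ^ (l.nStat + l.size) *
        ∏ i ∈ Finset.Icc 1 l.size,
          ∏ j ∈ Finset.Icc 1 (l.mult i / 2), (1 - 1 / p ^ (2 * j)))
  else 0

/-! Write `q = 1/p`. Removing the first column (of length `r = r(λ)`) of `λ` leaves a
partition `μ` with at most `r` parts, and `P^Sym_n(λ) = T(n, r) · P^Sym_r(μ)` with
`T(n, r) = (q;q)_n q^C(r+1,2) (q;q²)_⌈(n-r)/2⌉ / ((q;q)_r (q;q)_(n-r))`.
Summing over `μ` gives `S_n = ∑_{r ≤ n} T(n, r) S_r` for `S_n = ∑_λ P^Sym_n(λ)`; since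
`S_0 = 1` and `T(n, n) = q^C(n+1,2) < 1` for `n ≥ 1`, strong induction reduces the theorem to
`∑_{r ≤ n} T(n, r) = 1`. That sum does not change from `n` to `n + 1`: by `q`-Pascal
recurrences, `T(n + 1, ·)` is `T(n, ·)` with each `q^(n+1) T(n, r)`, `n - r` even, moved from
`r` to `r + 1`. Summability comes from `P^Sym_n(λ) ≤ q^|λ| / (1 - q)^n` and the embedding of
partitions with at most `n` parts into `ℕ^n` by their padded lists of parts. -/

lemma choose_two_succ (k : ℕ) : (k + 1).choose 2 = k.choose 2 + k := by
  rw [Nat.choose_succ_succ', Nat.choose_one_right, add_comm]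

@[to_additive sum_Icc_one_succ]
lemma prod_Icc_one_succ {α : Type*} [CommMonoid α] (f : ℕ → α) (n : ℕ) :
    ∏ i ∈ Icc 1 (n + 1), f i = f 1 * ∏ i ∈ Icc 1 n, f (i + 1) := by
  induction n with
  | zero => simp
  | succ n ih => rw [prod_Icc_succ_top (by omega), ih, prod_Icc_succ_top (by omega), mul_assoc]

lemma Multiset.filter_replicate_of_not {α : Type*} {p : α → Prop} [DecidablePred p] {a : α}
    (ha : ¬p a) (n : ℕ) : (Multiset.replicate n a).filter p = 0 :=
  Multiset.filter_eq_nil.2 fun _ hx => Multiset.eq_of_mem_replicate hx ▸ ha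

-- `qPoch q k = (q;q)_k`, `oddPoch q m = (q;q²)_m`, `evenPoch q m = (q²;q²)_m`.
def qPoch (q : ℝ) (k : ℕ) : ℝ := ∏ j ∈ Icc 1 k, (1 - q ^ j)

def oddPoch (q : ℝ) (m : ℕ) : ℝ := ∏ i ∈ Icc 1 m, (1 - q ^ (2 * i - 1))

def evenPoch (q : ℝ) (m : ℕ) : ℝ := ∏ i ∈ Icc 1 m, (1 - q ^ (2 * i))

section QAnalogues

variable {q : ℝ}

lemma qPoch_zero : qPoch q 0 = 1 := rfl

lemma qPoch_succ (k : ℕ) : qPoch q (k + 1) = qPoch q k * (1 - q ^ (k + 1)) :=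
  prod_Icc_succ_top (by omega) _

lemma oddPoch_zero : oddPoch q 0 = 1 := rfl

lemma oddPoch_succ (m : ℕ) : oddPoch q (m + 1) = oddPoch q m * (1 - q ^ (2 * m + 1)) :=
  prod_Icc_succ_top (by omega) _

lemma evenPoch_succ (m : ℕ) : evenPoch q (m + 1) = evenPoch q m * (1 - q ^ (2 * m + 2)) :=
  prod_Icc_succ_top (by omega) _

lemma qPoch_two_mul (m : ℕ) : qPoch q (2 * m) = oddPoch q m * evenPoch q m := by
  induction m with
  | zero => simp [qPoch, oddPoch, evenPoch]
  | succ m ih =>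
    rw [show 2 * (m + 1) = 2 * m + 1 + 1 by ring, qPoch_succ, qPoch_succ, ih, oddPoch_succ,
      evenPoch_succ]
    ring

lemma oddPoch_mul_evenPoch (m : ℕ) :
    oddPoch q ((m + 1) / 2) * evenPoch q (m / 2) = qPoch q m := by
  obtain ⟨k, rfl | rfl⟩ := Nat.even_or_odd' m
  · rw [show (2 * k + 1) / 2 = k by omega, show 2 * k / 2 = k by omega, qPoch_two_mul]
  · rw [show (2 * k + 1 + 1) / 2 = k + 1 by omega, show (2 * k + 1) / 2 = k by omega, qPoch_succ,
      qPoch_two_mul, oddPoch_succ]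
    ring

lemma qPoch_sub_mul_prod_Icc (n k : ℕ) :
    qPoch q (n - k) * ∏ j ∈ Icc (n - k + 1) n, (1 - q ^ j) = qPoch q n := by
  have Icc_one (m : ℕ) : Icc 1 m = Ioc 0 m := Icc_add_one_left_eq_Ioc 0 m
  rw [qPoch, qPoch, Icc_one, Icc_one, Icc_add_one_left_eq_Ioc,
    prod_Ioc_consecutive _ (Nat.zero_le _) (Nat.sub_le n k)]

lemma one_sub_pow_pos (hq₀ : 0 ≤ q) (hq₁ : q < 1) {j : ℕ} (hj : j ≠ 0) : 0 < 1 - q ^ j :=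
  sub_pos.2 (pow_lt_one₀ hq₀ hq₁ hj)

lemma qPoch_pos (hq₀ : 0 ≤ q) (hq₁ : q < 1) (k : ℕ) : 0 < qPoch q k :=
  prod_pos fun j hj => one_sub_pow_pos hq₀ hq₁ (by have := (mem_Icc.1 hj).1; omega)

lemma evenPoch_pos (hq₀ : 0 ≤ q) (hq₁ : q < 1) (m : ℕ) : 0 < evenPoch q m :=
  prod_pos fun i hi => one_sub_pow_pos hq₀ hq₁ (by have := (mem_Icc.1 hi).1; omega)

end QAnalogues

def symCoeff (q : ℝ) (n r : ℕ) : ℝ :=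
  qPoch q n * q ^ (r + 1).choose 2 * oddPoch q ((n - r + 1) / 2) / (qPoch q r * qPoch q (n - r))

section SymCoeff

variable {q : ℝ} {n r : ℕ}

lemma symCoeff_self (hq₀ : 0 ≤ q) (hq₁ : q < 1) (n : ℕ) :
    symCoeff q n n = q ^ (n + 1).choose 2 := by
  have := (qPoch_pos hq₀ hq₁ n).ne'
  simp only [symCoeff, Nat.sub_self, zero_add, Nat.reduceDiv, qPoch_zero, oddPoch_zero]
  field_simp

lemma symCoeff_succ_of_even (hq₀ : 0 ≤ q) (hq₁ : q < 1) (hr : r ≤ n) (h : Even (n - r)) :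
    symCoeff q (n + 1) r = (1 - q ^ (n + 1)) * symCoeff q n r := by
  obtain ⟨m, hm⟩ := h
  have := (qPoch_pos hq₀ hq₁ r).ne'
  have := (qPoch_pos hq₀ hq₁ (m + m)).ne'
  have := (one_sub_pow_pos hq₀ hq₁ (j := 2 * m + 1) (by omega)).ne'
  rw [symCoeff, symCoeff, show n + 1 - r = m + m + 1 by omega, hm,
    show (m + m + 1 + 1) / 2 = m + 1 by omega, show (m + m + 1) / 2 = m by omega,
    qPoch_succ n, qPoch_succ (m + m), oddPoch_succ, show m + m + 1 = 2 * m + 1 by ring]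
  field_simp

lemma symCoeff_succ_succ_of_even (hq₀ : 0 ≤ q) (hq₁ : q < 1) (hr : r + 1 ≤ n)
    (h : Even (n - r)) :
    symCoeff q (n + 1) (r + 1) = symCoeff q n (r + 1) + q ^ (n + 1) * symCoeff q n r := by
  obtain ⟨m, rfl⟩ : ∃ m, n = r + 1 + (2 * m + 1) := by
    obtain ⟨m, hm⟩ := h; exact ⟨m - 1, by omega⟩
  have := (qPoch_pos hq₀ hq₁ r).ne'
  have := (qPoch_pos hq₀ hq₁ (2 * m + 1)).ne'
  have := (one_sub_pow_pos hq₀ hq₁ (j := r + 1) (by omega)).ne'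
  have := (one_sub_pow_pos hq₀ hq₁ (j := 2 * m + 1 + 1) (by omega)).ne'
  rw [symCoeff, symCoeff, symCoeff,
    show r + 1 + (2 * m + 1) + 1 - (r + 1) = 2 * m + 1 + 1 by omega,
    show r + 1 + (2 * m + 1) - (r + 1) = 2 * m + 1 by omega,
    show r + 1 + (2 * m + 1) - r = 2 * m + 1 + 1 by omega,
    show (2 * m + 1 + 1 + 1) / 2 = m + 1 by omega, show (2 * m + 1 + 1) / 2 = m + 1 by omega,
    choose_two_succ (r + 1), qPoch_succ (r + 1 + (2 * m + 1)), qPoch_succ r,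
    qPoch_succ (2 * m + 1),
    show r + 1 + (2 * m + 1) + 1 = (r + 1) + (2 * m + 1 + 1) by ring,
    pow_add q _ (r + 1), pow_add q (r + 1)]
  field_simp
  ring

lemma symCoeff_succ_zero_of_odd (hq₀ : 0 ≤ q) (hq₁ : q < 1) (h : Odd n) :
    symCoeff q (n + 1) 0 = symCoeff q n 0 := by
  obtain ⟨m, rfl⟩ := h
  have := (qPoch_pos hq₀ hq₁ (2 * m + 1)).ne'
  have := (qPoch_pos hq₀ hq₁ (2 * m + 1 + 1)).ne'
  simp only [symCoeff, Nat.sub_zero, qPoch_zero,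
    show (2 * m + 1 + 1 + 1) / 2 = (2 * m + 1 + 1) / 2 by omega]
  field_simp

def symCoeffTransfer (q : ℝ) (n r : ℕ) : ℝ :=
  if 1 ≤ r ∧ r ≤ n + 1 ∧ Even (n + 1 - r) then q ^ (n + 1) * symCoeff q n (r - 1) else 0

lemma symCoeff_succ (hq₀ : 0 ≤ q) (hq₁ : q < 1) (hr : r ≤ n + 1) :
    symCoeff q (n + 1) r = (if r ≤ n then symCoeff q n r else 0) +
      (symCoeffTransfer q n r - symCoeffTransfer q n (r + 1)) := by
  have even_succ_sub {a b : ℕ} (hab : b ≤ a) : Even (a + 1 - b) ↔ ¬Even (a - b) := by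
    rw [show a + 1 - b = a - b + 1 by omega, Nat.even_add_one]
  simp only [symCoeffTransfer]
  rcases hr.eq_or_lt with rfl | hrn
  · rw [if_neg (by omega), if_pos ⟨by omega, le_rfl, by simp⟩, if_neg (by omega),
      Nat.add_sub_cancel, symCoeff_self hq₀ hq₁, symCoeff_self hq₀ hq₁, choose_two_succ,
      pow_add]
    ring
  rw [Nat.lt_succ_iff] at hrn
  by_cases he : Even (n - r)
  · rw [if_pos hrn, if_neg (by rw [even_succ_sub hrn]; tauto),
      if_pos ⟨by omega, by omega, by rwa [Nat.add_sub_add_right]⟩, Nat.add_sub_cancel,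
      symCoeff_succ_of_even hq₀ hq₁ hrn he]
    ring
  obtain _ | s := r
  · rw [if_pos hrn, if_neg (by omega), if_neg (by simpa [Nat.even_add_one] using he),
      symCoeff_succ_zero_of_odd hq₀ hq₁ (by simpa using he)]
    ring
  · have hs : Even (n - s) := by
      rw [show n - s = n - (s + 1) + 1 by omega, Nat.even_add_one]; exact he
    rw [if_pos hrn, if_pos ⟨by omega, by omega, by rwa [Nat.add_sub_add_right]⟩,
      if_neg (by rw [Nat.add_sub_add_right]; tauto), Nat.add_sub_cancel,
      symCoeff_succ_succ_of_even hq₀ hq₁ hrn hs]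
    ring

lemma sum_symCoeff (hq₀ : 0 ≤ q) (hq₁ : q < 1) (n : ℕ) :
    ∑ r ∈ range (n + 1), symCoeff q n r = 1 := by
  induction n with
  | zero => simp [symCoeff, qPoch_zero, oddPoch_zero]
  | succ n ih =>
    calc ∑ r ∈ range (n + 1 + 1), symCoeff q (n + 1) r
        = ∑ r ∈ range (n + 1 + 1), ((if r ≤ n then symCoeff q n r else 0) +
            (symCoeffTransfer q n r - symCoeffTransfer q n (r + 1))) :=
          sum_congr rfl fun r hr => symCoeff_succ hq₀ hq₁ (by rw [mem_range] at hr; omega)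
      _ = ∑ r ∈ range (n + 1), symCoeff q n r +
            (symCoeffTransfer q n 0 - symCoeffTransfer q n (n + 1 + 1)) := by
          rw [sum_add_distrib, sum_range_sub', sum_range_succ, if_neg (by omega), add_zero]
          congr 1
          exact sum_congr rfl fun r hr => if_pos (by rw [mem_range] at hr; omega)
      _ = 1 := by simp [symCoeffTransfer, ih]

namespace Ptn

def empty : Ptn := ⟨0, fun _ h => absurd h (Multiset.notMem_zero _)⟩

variable {l μ : Ptn} {i k M : ℕ}

lemma eq_empty_of_numParts_eq_zero (h : l.numParts = 0) : l = empty :=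
  Subtype.ext (Multiset.card_eq_zero.1 h)

lemma le_size_of_mem {x : ℕ} (hx : x ∈ l.1) : x ≤ l.size := Multiset.le_sum_of_mem hx

lemma mult_eq_zero_of_size_lt (hi : l.size < i) : l.mult i = 0 :=
  Multiset.count_eq_zero.2 fun hmem => absurd (le_size_of_mem hmem) (by omega)

lemma col_eq_zero_of_size_lt (hi : l.size < i) : l.col i = 0 :=
  Multiset.card_eq_zero.2 <| Multiset.filter_eq_nil.2 fun x hx hix =>
    absurd (le_size_of_mem hx) (by omega)

lemma sum_mult_eq_numParts (l : Ptn) : ∑ i ∈ Icc 1 l.size, l.mult i = l.numParts :=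
  Multiset.sum_count_eq_card fun x hx => mem_Icc.2 ⟨l.2 x hx, le_size_of_mem hx⟩

lemma nStat_eq_sum_Icc (h : l.size ≤ M) : l.nStat = ∑ i ∈ Icc 1 M, (l.col i).choose 2 :=
  sum_subset (Icc_subset_Icc le_rfl h) fun i hi hni => by
    rw [col_eq_zero_of_size_lt (by simp only [mem_Icc] at hi hni; omega)]; rfl

lemma prod_mult_eq_prod_Icc {α : Type*} [CommMonoid α] (f : ℕ → α) (hf : f 0 = 1)
    (h : l.size ≤ M) : ∏ i ∈ Icc 1 l.size, f (l.mult i) = ∏ i ∈ Icc 1 M, f (l.mult i) :=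
  prod_subset (Icc_subset_Icc le_rfl h) fun i hi hni => by
    rw [mult_eq_zero_of_size_lt (by simp only [mem_Icc] at hi hni; omega), hf]

def addCol (k : ℕ) (μ : Ptn) : Ptn :=
  ⟨μ.1.map (· + 1) + Multiset.replicate (k - μ.numParts) 1, fun x hx => by
    rcases Multiset.mem_add.1 hx with hx | hx
    · obtain ⟨y, _, rfl⟩ := Multiset.mem_map.1 hx; omega
    · rw [Multiset.eq_of_mem_replicate hx]; norm_num⟩

def removeCol (l : Ptn) : Ptn :=
  ⟨(l.1.filter (2 ≤ ·)).map (· - 1), fun x hx => by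
    obtain ⟨y, hy, rfl⟩ := Multiset.mem_map.1 hx
    have := Multiset.of_mem_filter hy
    omega⟩

lemma numParts_addCol (h : μ.numParts ≤ k) : (addCol k μ).numParts = k := by
  simp only [numParts, addCol, Multiset.card_add, Multiset.card_map,
    Multiset.card_replicate] at h ⊢
  omega

lemma size_addCol (h : μ.numParts ≤ k) : (addCol k μ).size = k + μ.size := by
  simp only [size, numParts, addCol, Multiset.sum_add, Multiset.sum_replicate, smul_eq_mul,
    mul_one, Multiset.sum_map_add, Multiset.map_id', Multiset.map_const'] at h ⊢
  omega

lemma mult_addCol_one : (addCol k μ).mult 1 = k - μ.numParts := by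
  simp only [mult, addCol, Multiset.count_add, Multiset.count_replicate_self, add_eq_right]
  exact Multiset.count_eq_zero.2 fun hmem => by
    obtain ⟨y, hy, hy1⟩ := Multiset.mem_map.1 hmem
    have := μ.2 y hy
    omega

lemma mult_addCol_succ (hi : i ≠ 0) : (addCol k μ).mult (i + 1) = μ.mult i := by
  simp only [mult, addCol, Multiset.count_add, Multiset.count_replicate]
  rw [if_neg (by omega), add_zero]
  exact Multiset.count_map_eq_count' _ _ (add_left_injective 1) i

lemma col_addCol_one (h : μ.numParts ≤ k) : (addCol k μ).col 1 = k := by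
  rw [col, Multiset.filter_eq_self.2 fun x hx =>
    Nat.one_le_iff_ne_zero.2 ((addCol k μ).2 x hx).ne']
  exact numParts_addCol h

lemma col_addCol_succ (hi : i ≠ 0) : (addCol k μ).col (i + 1) = μ.col i := by
  simp only [col, addCol, Multiset.filter_add, Multiset.card_add, Multiset.filter_map,
    Multiset.card_map]
  rw [Multiset.filter_replicate_of_not (by omega), Multiset.card_zero, add_zero]
  congr 2
  ext x
  simp

lemma nStat_addCol (h : μ.numParts ≤ k) : (addCol k μ).nStat = k.choose 2 + μ.nStat := by
  rw [nStat_eq_sum_Icc (M := k + μ.size + 1) (by rw [size_addCol h]; omega), sum_Icc_one_succ,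
    col_addCol_one h, nStat_eq_sum_Icc (M := k + μ.size) (by omega)]
  congr 1
  exact sum_congr rfl fun i hi => by rw [col_addCol_succ (by simp at hi; omega)]

lemma removeCol_addCol : removeCol (addCol k μ) = μ := by
  apply Subtype.ext
  simp only [removeCol, addCol, Multiset.filter_add]
  rw [Multiset.filter_replicate_of_not (by omega), add_zero,
    Multiset.filter_eq_self.2 fun x hx => by
      obtain ⟨y, hy, rfl⟩ := Multiset.mem_map.1 hx; have := μ.2 y hy; omega,
    Multiset.map_map]
  simp

lemma numParts_removeCol_le (l : Ptn) : (removeCol l).numParts ≤ l.numParts := by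
  simp only [numParts, removeCol, Multiset.card_map]
  exact Multiset.card_le_card (Multiset.filter_le _ _)

lemma addCol_removeCol (l : Ptn) : addCol l.numParts (removeCol l) = l := by
  have ones : l.1.filter (¬2 ≤ ·) = Multiset.replicate (l.1.filter (¬2 ≤ ·)).card 1 :=
    Multiset.eq_replicate.2 ⟨rfl, fun x hx => by
      have := l.2 x (Multiset.mem_of_mem_filter hx); have := Multiset.of_mem_filter hx; omega⟩
  have card_split := congrArg Multiset.card (Multiset.filter_add_not (2 ≤ ·) l.1)
  apply Subtype.ext
  simp only [addCol, removeCol, numParts, Multiset.card_map, Multiset.map_map] at card_split ⊢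
  rw [Multiset.card_add] at card_split
  rw [show l.1.card - (l.1.filter (2 ≤ ·)).card = (l.1.filter (¬2 ≤ ·)).card by omega,
    ← ones,
    Multiset.map_congr (g := id) rfl fun x hx => by
      have := Multiset.of_mem_filter hx; simp only [Function.comp_apply, id]; omega,
    Multiset.map_id, Multiset.filter_add_not]

def addColEquiv : (Σ k, {μ : Ptn // μ.numParts ≤ k}) ≃ Ptn where
  toFun x := addCol x.1 x.2
  invFun l := ⟨l.numParts, removeCol l, numParts_removeCol_le l⟩
  left_inv x := Sigma.subtype_ext (numParts_addCol x.2.2) removeCol_addCol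
  right_inv := addCol_removeCol

@[simp]
lemma addColEquiv_mk (k : ℕ) (μ : {μ : Ptn // μ.numParts ≤ k}) :
    addColEquiv ⟨k, μ⟩ = addCol k μ := rfl

end Ptn

open Ptn

def symPrefactor (q : ℝ) (n r : ℕ) : ℝ :=
  (∏ j ∈ Icc (n - r + 1) n, (1 - q ^ j)) * oddPoch q ((n - r + 1) / 2)

def symWeight (q : ℝ) (l : Ptn) : ℝ :=
  q ^ (l.nStat + l.size) / ∏ i ∈ Icc 1 l.size, evenPoch q (l.mult i / 2)

section Weights

variable {p q : ℝ} {n k : ℕ} {l μ : Ptn}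

lemma PSym_eq_of_numParts_le (h : l.numParts ≤ n) :
    PSym p n l = symPrefactor p⁻¹ n l.numParts * symWeight p⁻¹ l := by
  simp only [PSym, if_pos h, symPrefactor, symWeight, oddPoch, evenPoch, one_div, inv_pow]
  ring

lemma PSym_eq_zero_of_lt (h : n < l.numParts) : PSym p n l = 0 := if_neg (by omega)

lemma symPrefactor_mul_qPoch (n r : ℕ) :
    symPrefactor q n r * qPoch q (n - r) = qPoch q n * oddPoch q ((n - r + 1) / 2) := by
  rw [symPrefactor, mul_right_comm, mul_comm _ (qPoch q _), qPoch_sub_mul_prod_Icc]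

lemma symPrefactor_mul_evenPoch (n r : ℕ) :
    symPrefactor q n r * evenPoch q ((n - r) / 2) = qPoch q n := by
  rw [symPrefactor, mul_assoc, oddPoch_mul_evenPoch, mul_comm, qPoch_sub_mul_prod_Icc]

lemma prod_evenPoch_addCol (h : μ.numParts ≤ k) :
    ∏ i ∈ Icc 1 (addCol k μ).size, evenPoch q ((addCol k μ).mult i / 2) =
      evenPoch q ((k - μ.numParts) / 2) * ∏ i ∈ Icc 1 μ.size, evenPoch q (μ.mult i / 2) := by
  have evenPoch_zero : evenPoch q (0 / 2) = 1 := rfl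
  rw [prod_mult_eq_prod_Icc (fun m => evenPoch q (m / 2)) evenPoch_zero (M := k + μ.size + 1)
      (by rw [size_addCol h]; omega), prod_Icc_one_succ, mult_addCol_one,
    prod_mult_eq_prod_Icc (fun m => evenPoch q (m / 2)) evenPoch_zero (M := k + μ.size) (by omega)]
  congr 1
  exact prod_congr rfl fun i hi => by rw [mult_addCol_succ (by simp at hi; omega)]

lemma symWeight_addCol (h : μ.numParts ≤ k) :
    symWeight q (addCol k μ) =
      q ^ (k + 1).choose 2 * symWeight q μ / evenPoch q ((k - μ.numParts) / 2) := by
  rw [symWeight, symWeight, prod_evenPoch_addCol h, nStat_addCol h, size_addCol h,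
    choose_two_succ,
    show k.choose 2 + μ.nStat + (k + μ.size) = k.choose 2 + k + (μ.nStat + μ.size) by ring,
    pow_add]
  ring

lemma PSym_addCol (hp : 1 < p) (h : μ.numParts ≤ k) (hk : k ≤ n) :
    PSym p n (addCol k μ) = symCoeff p⁻¹ n k * PSym p k μ := by
  rw [PSym_eq_of_numParts_le (by rwa [numParts_addCol h]), numParts_addCol h,
    PSym_eq_of_numParts_le h, symWeight_addCol h, symCoeff]
  have hq₀ : 0 ≤ p⁻¹ := by positivity
  have hq₁ : p⁻¹ < 1 := inv_lt_one_of_one_lt₀ hp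
  generalize p⁻¹ = q at *
  have := (qPoch_pos hq₀ hq₁ k).ne'
  rw [eq_div_of_mul_eq (qPoch_pos hq₀ hq₁ (n - k)).ne' (symPrefactor_mul_qPoch n k),
    eq_div_of_mul_eq (evenPoch_pos hq₀ hq₁ _).ne' (symPrefactor_mul_evenPoch k μ.numParts)]
  field_simp

end Weights

section Bounds

variable {p q : ℝ} {n : ℕ} {l : Ptn}

lemma prod_one_sub_pow_nonneg (hq₀ : 0 ≤ q) (hq₁ : q ≤ 1) (s : Finset ℕ) (e : ℕ → ℕ) :
    0 ≤ ∏ j ∈ s, (1 - q ^ e j) :=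
  prod_nonneg fun _ _ => sub_nonneg.2 (pow_le_one₀ hq₀ hq₁)

lemma prod_one_sub_pow_le_one (hq₀ : 0 ≤ q) (hq₁ : q ≤ 1) (s : Finset ℕ) (e : ℕ → ℕ) :
    ∏ j ∈ s, (1 - q ^ e j) ≤ 1 :=
  prod_le_one (fun _ _ => sub_nonneg.2 (pow_le_one₀ hq₀ hq₁))
    fun _ _ => sub_le_self _ (pow_nonneg hq₀ _)

lemma symPrefactor_nonneg (hq₀ : 0 ≤ q) (hq₁ : q ≤ 1) (n r : ℕ) :
    0 ≤ symPrefactor q n r :=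
  mul_nonneg (prod_one_sub_pow_nonneg hq₀ hq₁ _ fun j => j)
    (prod_one_sub_pow_nonneg hq₀ hq₁ _ fun i => 2 * i - 1)

lemma symPrefactor_le_one (hq₀ : 0 ≤ q) (hq₁ : q ≤ 1) (n r : ℕ) :
    symPrefactor q n r ≤ 1 :=
  mul_le_one₀ (prod_one_sub_pow_le_one hq₀ hq₁ _ fun j => j)
    (prod_one_sub_pow_nonneg hq₀ hq₁ _ fun i => 2 * i - 1)
    (prod_one_sub_pow_le_one hq₀ hq₁ _ fun i => 2 * i - 1)

lemma symWeight_nonneg (hq₀ : 0 ≤ q) (hq₁ : q < 1) (l : Ptn) : 0 ≤ symWeight q l :=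
  div_nonneg (pow_nonneg hq₀ _) (prod_nonneg fun _ _ => (evenPoch_pos hq₀ hq₁ _).le)

lemma pow_le_evenPoch (hq₀ : 0 ≤ q) (hq₁ : q ≤ 1) (m : ℕ) :
    (1 - q) ^ m ≤ evenPoch q m := by
  calc (1 - q) ^ m = ∏ _ ∈ Icc 1 m, (1 - q) := by simp
    _ ≤ evenPoch q m := prod_le_prod (fun _ _ => sub_nonneg.2 hq₁) fun i hi =>
      sub_le_sub_left (pow_le_of_le_one hq₀ hq₁ (by simp at hi; omega)) 1

lemma pow_numParts_le_prod_evenPoch (hq₀ : 0 ≤ q) (hq₁ : q ≤ 1) (l : Ptn) :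
    (1 - q) ^ l.numParts ≤ ∏ i ∈ Icc 1 l.size, evenPoch q (l.mult i / 2) := by
  have h₀ : 0 ≤ 1 - q := sub_nonneg.2 hq₁
  calc (1 - q) ^ l.numParts = ∏ i ∈ Icc 1 l.size, (1 - q) ^ l.mult i := by
        rw [prod_pow_eq_pow_sum, sum_mult_eq_numParts]
    _ ≤ ∏ i ∈ Icc 1 l.size, (1 - q) ^ (l.mult i / 2) :=
        prod_le_prod (fun _ _ => pow_nonneg h₀ _) fun _ _ =>
          pow_le_pow_of_le_one h₀ (sub_le_self _ hq₀) (Nat.div_le_self _ _)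
    _ ≤ _ := prod_le_prod (fun _ _ => pow_nonneg h₀ _) fun _ _ => pow_le_evenPoch hq₀ hq₁ _

lemma symWeight_le (hq₀ : 0 ≤ q) (hq₁ : q < 1) (l : Ptn) :
    symWeight q l ≤ q ^ l.size / (1 - q) ^ l.numParts :=
  div_le_div₀ (pow_nonneg hq₀ _) (pow_le_pow_of_le_one hq₀ hq₁.le (Nat.le_add_left _ _))
    (pow_pos (sub_pos.2 hq₁) _) (pow_numParts_le_prod_evenPoch hq₀ hq₁.le l)

lemma PSym_nonneg (hp : 1 < p) (n : ℕ) (l : Ptn) : 0 ≤ PSym p n l := by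
  have hq₀ : 0 ≤ p⁻¹ := by positivity
  have hq₁ : p⁻¹ < 1 := inv_lt_one_of_one_lt₀ hp
  rcases le_or_gt l.numParts n with h | h
  · rw [PSym_eq_of_numParts_le h]
    exact mul_nonneg (symPrefactor_nonneg hq₀ hq₁.le _ _) (symWeight_nonneg hq₀ hq₁ l)
  · rw [PSym_eq_zero_of_lt h]

lemma PSym_le (hp : 1 < p) (h : l.numParts ≤ n) :
    PSym p n l ≤ p⁻¹ ^ l.size / (1 - p⁻¹) ^ n := by
  have hq₀ : 0 ≤ p⁻¹ := by positivity
  have hq₁ : p⁻¹ < 1 := inv_lt_one_of_one_lt₀ hp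
  have h₀ : 0 < 1 - p⁻¹ := sub_pos.2 hq₁
  rw [PSym_eq_of_numParts_le h]
  calc symPrefactor p⁻¹ n l.numParts * symWeight p⁻¹ l ≤ 1 * symWeight p⁻¹ l :=
        mul_le_mul_of_nonneg_right (symPrefactor_le_one hq₀ hq₁.le _ _)
          (symWeight_nonneg hq₀ hq₁ l)
    _ ≤ p⁻¹ ^ l.size / (1 - p⁻¹) ^ l.numParts :=
        (one_mul _).trans_le (symWeight_le hq₀ hq₁ l)
    _ ≤ p⁻¹ ^ l.size / (1 - p⁻¹) ^ n :=
        div_le_div_of_nonneg_left (pow_nonneg hq₀ _) (pow_pos h₀ _)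
          (pow_le_pow_of_le_one h₀.le (sub_le_self _ hq₀) h)

end Bounds

namespace Ptn

variable {n : ℕ} {l : Ptn}

def paddedParts (n : ℕ) (l : Ptn) : List ℕ := l.1.toList ++ List.replicate (n - l.numParts) 0

lemma length_paddedParts (h : l.numParts ≤ n) : (paddedParts n l).length = n := by
  simp only [paddedParts, List.length_append, Multiset.length_toList, List.length_replicate]
  exact Nat.add_sub_of_le h

lemma sum_paddedParts : (paddedParts n l).sum = l.size := by
  simp [paddedParts, size]

lemma filter_paddedParts : (paddedParts n l : Multiset ℕ).filter (· ≠ 0) = l.1 := by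
  rw [paddedParts, ← Multiset.coe_add, Multiset.coe_toList, Multiset.filter_add,
    Multiset.filter_eq_self.2 fun x hx => (l.2 x hx).ne', Multiset.coe_replicate,
    Multiset.filter_replicate_of_not (by simp), add_zero]

def toTuple (l : {l : Ptn // l.numParts ≤ n}) : Fin n → ℕ :=
  fun i => (paddedParts n l.1)[i.1]'(by rw [length_paddedParts l.2]; exact i.2)

lemma toTuple_injective : Function.Injective (toTuple (n := n)) := fun a b hab => by
  have : paddedParts n a.1 = paddedParts n b.1 :=
    List.ext_getElem (by rw [length_paddedParts a.2, length_paddedParts b.2]) fun i ha _ =>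
      congrFun hab ⟨i, by rwa [length_paddedParts a.2] at ha⟩
  exact Subtype.ext <| Subtype.ext <| by
    rw [← filter_paddedParts (n := n) (l := a.1), this, filter_paddedParts]

lemma sum_toTuple (l : {l : Ptn // l.numParts ≤ n}) : ∑ i, toTuple l i = l.1.size := by
  rw [← sum_paddedParts (n := n), ← Fin.sum_univ_getElem]
  exact Fintype.sum_equiv (finCongr (length_paddedParts l.2).symm) _ _ fun _ => rfl

end Ptn

lemma summable_pow_sum {q : ℝ} (hq₀ : 0 ≤ q) (hq₁ : q < 1) :
    ∀ n, Summable fun v : Fin n → ℕ => q ^ ∑ i, v i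
  | 0 => .of_finite
  | n + 1 => by
    rw [← (Fin.consEquiv fun _ => ℕ).summable_iff]
    simpa [Function.comp_def, Fin.consEquiv, Fin.sum_cons, pow_add] using
      (summable_geometric_of_lt_one hq₀ hq₁).mul_of_nonneg (summable_pow_sum hq₀ hq₁ n)
        (fun _ => by positivity) fun _ => by positivity

lemma summable_PSym {p : ℝ} (hp : 1 < p) (n : ℕ) : Summable (PSym p n) := by
  have hq₀ : 0 ≤ p⁻¹ := by positivity
  have hq₁ : p⁻¹ < 1 := inv_lt_one_of_one_lt₀ hp
  refine ((Subtype.val_injective (p := fun l : Ptn => l.numParts ≤ n)).summable_iff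
    fun l hl => PSym_eq_zero_of_lt ?_).1 ?_
  · by_contra h
    exact hl ⟨⟨l, not_lt.1 h⟩, rfl⟩
  · refine .of_nonneg_of_le (fun l => PSym_nonneg hp n l) (fun l => PSym_le hp l.2) ?_
    simpa [Function.comp_def, sum_toTuple] using
      ((summable_pow_sum hq₀ hq₁ n).comp_injective toTuple_injective).div_const _

lemma tsum_PSym_eq_sum {p : ℝ} (hp : 1 < p) (n : ℕ) :
    ∑' l, PSym p n l = ∑ r ∈ range (n + 1), symCoeff p⁻¹ n r * ∑' l, PSym p r l := by
  have fiber (r : ℕ) : ∑' μ : {μ : Ptn // μ.numParts ≤ r}, PSym p n (addCol r μ) =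
      if r ≤ n then symCoeff p⁻¹ n r * ∑' l, PSym p r l else 0 := by
    split_ifs with hr
    · rw [tsum_congr fun μ => PSym_addCol hp μ.2 hr, tsum_mul_left]
      exact congrArg _ <| tsum_subtype_eq_of_support_subset (s := {μ : Ptn | μ.numParts ≤ r})
        fun l hl => not_lt.1 fun h => hl (PSym_eq_zero_of_lt h)
    · rw [tsum_congr fun μ => PSym_eq_zero_of_lt (by rw [numParts_addCol μ.2]; omega), tsum_zero]
  calc ∑' l, PSym p n l = ∑' x, PSym p n (addColEquiv x) := (addColEquiv.tsum_eq _).symm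
    _ = ∑' r, ∑' μ : {μ : Ptn // μ.numParts ≤ r}, PSym p n (addColEquiv ⟨r, μ⟩) :=
        (addColEquiv.summable_iff.2 (summable_PSym hp n)).tsum_sigma
    _ = ∑ r ∈ range (n + 1), symCoeff p⁻¹ n r * ∑' l, PSym p r l := by
        simp only [addColEquiv_mk]
        rw [tsum_congr fiber, tsum_eq_sum (s := range (n + 1)) fun r hr =>
          if_neg (by simpa [Nat.lt_succ_iff] using hr)]
        exact sum_congr rfl fun r hr => if_pos (by simpa [Nat.lt_succ_iff] using hr)

lemma tsum_PSym_zero (p : ℝ) : ∑' l, PSym p 0 l = 1 := by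
  rw [tsum_eq_single Ptn.empty fun l hl => PSym_eq_zero_of_lt <|
    Nat.pos_of_ne_zero fun h => hl (eq_empty_of_numParts_eq_zero h)]
  simp [PSym, Ptn.empty, numParts, nStat, size]

theorem PSym_is_probability_general (p : ℝ) (hp : 1 < p) (n : ℕ) :
    ∑' l : Ptn, PSym p n l = 1 := by
  induction n using Nat.strong_induction_on with
  | _ n ih =>
  obtain rfl | hn := n.eq_zero_or_pos
  · exact tsum_PSym_zero p
  have hq₀ : 0 ≤ p⁻¹ := by positivity
  have hq₁ : p⁻¹ < 1 := inv_lt_one_of_one_lt₀ hp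
  have hrec := tsum_PSym_eq_sum hp n
  rw [sum_range_succ, sum_congr rfl fun r hr => by rw [ih r (mem_range.1 hr), mul_one]] at hrec
  have hsum := sum_symCoeff hq₀ hq₁ n
  rw [sum_range_succ] at hsum
  have hlt : symCoeff p⁻¹ n n < 1 := by
    rw [symCoeff_self hq₀ hq₁]
    exact pow_lt_one₀ hq₀ hq₁ (Nat.choose_eq_zero_iff.not.2 (by omega))
  have : (1 - symCoeff p⁻¹ n n) * (∑' l, PSym p n l - 1) = 0 := by
    linear_combination hrec + hsum
  simpa [sub_eq_zero, hlt.ne'] using this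

/-- `P^{Sym}_n` is a probability distribution on partitions:
the sum over all partitions (it vanishes on partitions with more than `n` parts)
equals `1`. -/
theorem PSym_is_probability (p : ℝ) (hp : 1 < p) (n : ℕ) (hn : 0 < n) :
    ∑' l : Ptn, PSym p n l = 1 :=
  PSym_is_probability_general p hp n
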